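/- Let X be a real random variable whose density f is a finite Gaussian mixture f(x) = Σ_l w_l G_{μ_l, σ²}(x) with all weights w_l > 0. Then −log f is smooth, and if σ² is sufficiently large relative to max_{l,l'} |μ_l − μ_{l'}|, then −log f is convex on ℝ (i.e., the smoothed mixture density is log-concave for large enough variance). -/

import Mathlib

open Real

noncomputable section

def gauss1 (μ v x : ℝ) : ℝ := (2 * π * v) ^ (-(1 : ℝ) / 2) * exp (-(x - μ) ^ 2 / (2 * v))


lemma gauss1_pos (μ v : ℝ) (hv : 0 < v) (x : ℝ) : 0 < gauss1 μ v x := by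
  unfold gauss1
  positivity

lemma gauss1_contDiff (μ v : ℝ) (hv : 0 < v) : ContDiff ℝ (⊤ : ℕ∞) (gauss1 μ v) := by
  unfold gauss1
  have h2v : (2 : ℝ) * v ≠ 0 := by positivity
  apply ContDiff.mul contDiff_const
  exact (((contDiff_id.sub contDiff_const).pow 2).neg.div_const (2*v)).exp

lemma gauss1_hasDerivAt (μ v : ℝ) (hv : 0 < v) (x : ℝ) :
    HasDerivAt (gauss1 μ v) (gauss1 μ v x * ((μ - x) / v)) x := by
  have h0 : HasDerivAt (fun y : ℝ => y - μ) 1 x := (hasDerivAt_id x).sub_const μ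
  have h1 : HasDerivAt (fun y : ℝ => -(y - μ) ^ 2 / (2 * v)) ((μ - x) / v) x := by
    have h2 := ((h0.pow 2).neg).div_const (2 * v)
    refine h2.congr_deriv ?_
    field_simp
    ring
  have h3 := (h1.exp).const_mul ((2 * π * v) ^ (-(1:ℝ)/2))
  refine h3.congr_deriv ?_
  unfold gauss1
  ring

lemma key_ineq (n : ℕ) (a d : Fin n → ℝ) (c : ℝ) (ha : ∀ l, 0 ≤ a l)
    (hd : ∀ l l', (d l - d l') ^ 2 ≤ c) :
    (∑ l, a l) * (∑ l, a l * d l ^ 2) - (∑ l, a l * d l) ^ 2 ≤ c * (∑ l, a l) ^ 2 := by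
  have hkey : c * (∑ l, a l) ^ 2 -
      ((∑ l, a l) * (∑ l, a l * d l ^ 2) - (∑ l, a l * d l) ^ 2) =
      ∑ l, ∑ l', a l * a l' * (c - (d l - d l') ^ 2 / 2) := by
    have e1 : ∀ p q : Fin n → ℝ, (∑ l, p l) * (∑ l, q l) = ∑ l, ∑ l', p l * q l' := by
      intro p q; rw [Finset.sum_mul_sum]
    have expand : c * (∑ l, a l) ^ 2 -
        ((∑ l, a l) * (∑ l, a l * d l ^ 2) - (∑ l, a l * d l) ^ 2) =
        c * ((∑ l, a l) * (∑ l, a l)) - ((∑ l, a l) * (∑ l, a l * d l ^ 2)) / 2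
        - ((∑ l, a l * d l ^ 2) * (∑ l, a l)) / 2
        + (∑ l, a l * d l) * (∑ l, a l * d l) := by ring
    rw [expand, e1, e1, e1, e1]
    simp only [Finset.mul_sum, Finset.sum_div, ← Finset.sum_sub_distrib, ← Finset.sum_add_distrib]
    exact Finset.sum_congr rfl fun l _ => Finset.sum_congr rfl fun l' _ => by ring
  nlinarith [Finset.sum_nonneg (fun l (_ : l ∈ Finset.univ) =>
    Finset.sum_nonneg (fun l' (_ : l' ∈ Finset.univ) =>
      mul_nonneg (mul_nonneg (ha l) (ha l'))
        (by nlinarith [hd l l', hd l l] : (0:ℝ) ≤ c - (d l - d l') ^ 2 / 2))), hkey]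

/-- if `f(x) = Σₗ wₗ G_{μₗ,σ²}(x)` is a finite Gaussian mixture with
positive weights, then `−log f` is smooth; and if `σ ≥ max_{l,l'} |μₗ − μ_{l'}|`
then `−log f` is convex on `ℝ`, i.e. `f` is log-concave. -/
theorem gmm_log_concave_for_large_variance
    (L : ℕ) (hL : 0 < L) (σ : ℝ) (hσ : 0 < σ)
    (w : Fin L → ℝ) (hw : ∀ l, 0 < w l) (hw1 : ∑ l, w l = 1)
    (μ : Fin L → ℝ)
    (f : ℝ → ℝ) (hf : ∀ x, f x = ∑ l, w l * gauss1 (μ l) (σ ^ 2) x) :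
    ContDiff ℝ (⊤ : ℕ∞) (fun x => -Real.log (f x)) ∧
    ((∀ l l', |μ l - μ l'| ≤ σ) →
      ConvexOn ℝ Set.univ (fun x => -Real.log (f x))) := by
  have hv : (0:ℝ) < σ ^ 2 := by positivity
  set v : ℝ := σ ^ 2 with hvdef
  set a : Fin L → ℝ → ℝ := fun l x => w l * gauss1 (μ l) v x with ha_def
  have ha_pos : ∀ l x, 0 < a l x := fun l x =>
    mul_pos (hw l) (gauss1_pos _ _ hv x)
  have hfe : f = fun x => ∑ l, a l x := funext hf
  have hf_pos : ∀ x, 0 < f x := by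
    intro x
    rw [hfe]
    exact Finset.sum_pos (fun l _ => ha_pos l x) ⟨⟨0, hL⟩, Finset.mem_univ _⟩
  -- first and second derivative formulas
  set F1 : ℝ → ℝ := fun x => ∑ l, a l x * ((μ l - x) / v) with hF1_def
  set F2 : ℝ → ℝ := fun x => ∑ l, a l x * (((μ l - x) / v) ^ 2 - 1 / v) with hF2_def
  have hDa : ∀ l x, HasDerivAt (a l) (a l x * ((μ l - x) / v)) x := by
    intro l x
    have := (gauss1_hasDerivAt (μ l) v hv x).const_mul (w l)
    refine this.congr_deriv ?_
    all_goals ring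
  have hDf : ∀ x, HasDerivAt f (F1 x) x := by
    intro x
    rw [hfe]
    exact HasDerivAt.fun_sum fun l _ => hDa l x
  have hDF1 : ∀ x, HasDerivAt F1 (F2 x) x := by
    intro x
    apply HasDerivAt.fun_sum
    intro l _
    have hlin : HasDerivAt (fun y : ℝ => (μ l - y) / v) (-1 / v) x := by
      have := (((hasDerivAt_id x).const_sub (μ l))).div_const v
      refine this.congr_deriv ?_
      all_goals ring
    have := (hDa l x).mul hlin
    refine this.congr_deriv ?_
    all_goals ring
  -- smoothness
  have hcd : ContDiff ℝ (⊤ : ℕ∞) f := by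
    rw [hfe]
    exact ContDiff.sum fun l _ => contDiff_const.mul (gauss1_contDiff (μ l) v hv)
  have hsmooth : ContDiff ℝ (⊤ : ℕ∞) (fun x => -Real.log (f x)) :=
    (hcd.log fun x => (hf_pos x).ne').neg
  refine ⟨hsmooth, fun hmu => ?_⟩
  -- derivatives of g = -log f
  have hg1 : ∀ x, HasDerivAt (fun y => -Real.log (f y)) (-(F1 x / f x)) x :=
    fun x => ((hDf x).log (hf_pos x).ne').neg
  have hg2 : ∀ x, HasDerivAt (fun y => -(F1 y / f y))
      (-((F2 x * f x - F1 x * F1 x) / f x ^ 2)) x :=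
    fun x => (((hDF1 x).div (hDf x) (hf_pos x).ne')).neg
  have hderiv1 : deriv (fun y => -Real.log (f y)) = fun x => -(F1 x / f x) :=
    funext fun x => (hg1 x).deriv
  apply convexOn_univ_of_deriv2_nonneg
  · exact fun x => (hg1 x).differentiableAt
  · rw [hderiv1]
    exact fun x => (hg2 x).differentiableAt
  · intro x
    have h2 : deriv^[2] (fun y => -Real.log (f y)) x
        = -((F2 x * f x - F1 x * F1 x) / f x ^ 2) := by
      simp only [Function.iterate_succ, Function.iterate_zero, Function.comp_apply, id_eq,
        Function.iterate_one]
      rw [hderiv1]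
      exact (hg2 x).deriv
    rw [h2]
    rw [neg_nonneg, div_nonpos_iff]
    right
    constructor
    · -- F2 x * f x - F1 x * F1 x ≤ 0
      have hS : f x = ∑ l, a l x := by rw [hfe]
      set e : Fin L → ℝ := fun l => (μ l - x) / v with he_def
      have hF2x : F2 x = (∑ l, a l x * e l ^ 2) - (∑ l, a l x) / v := by
        simp only [hF2_def, he_def]
        rw [Finset.sum_div, ← Finset.sum_sub_distrib]
        exact Finset.sum_congr rfl fun l _ => by ring
      have hkey : (∑ l, a l x) * (∑ l, a l x * e l ^ 2) - (∑ l, a l x * e l) ^ 2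
          ≤ 1 / v * (∑ l, a l x) ^ 2 := key_ineq L (fun l => a l x) e (1 / v)
        (fun l => (ha_pos l x).le)
        (fun l l' => by
          have h1 : |μ l - μ l'| ≤ σ := hmu l l'
          have h2 : (μ l - μ l') ^ 2 ≤ σ ^ 2 := by
            nlinarith [abs_nonneg (μ l - μ l'), sq_abs (μ l - μ l')]
          have h3 : e l - e l' = (μ l - μ l') / v := by
            simp only [he_def]; ring
          rw [h3, div_pow]
          rw [div_le_div_iff₀ (by positivity) hv]
          have : v ^ 2 = v * v := sq v
          nlinarith)
      have hSpos := hf_pos x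
      rw [hS] at hSpos
      have hT : F1 x = ∑ l, a l x * e l := rfl
      rw [hF2x, hS, hT]
      have hid : (∑ l, a l x * e l ^ 2 - (∑ l, a l x) / v) * (∑ l, a l x)
          - (∑ l, a l x * e l) * (∑ l, a l x * e l)
          = ((∑ l, a l x) * (∑ l, a l x * e l ^ 2) - (∑ l, a l x * e l) ^ 2)
            - 1 / v * (∑ l, a l x) ^ 2 := by ring
      linarith [hkey, hid]
    · positivity
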